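/- arXiv:1111.3696 — 3 statements merged into one kernel-verified Lean document; each statement's English description precedes it below -/
import Mathlib

section
/- Let s > 0 and let A₁ ≤ A₂ be real constants. Suppose C : ℝ → ℝ satisfies γ/(2 ln 2) + A₁γ² ≤ C(γ) ≤ γ/(2 ln 2) + A₂γ² for all γ ∈ (0,1). For each α > 0 let E(α) = 1/(2 · C((1/α) ln(1+s)) · (α/s)), and let c(α) be any choice of positive real number satisfying c(α) = (1/2) log₂(1 + 2 c(α) E(α)) whenever such a number exists. Then lim_{α → ∞} c(α) = (1/2) log₂(1+s), i.e., the AWGN channel capacity evaluated at the limiting SNR per bit of the modified SIC receiver equals the limiting spectral efficiency (1/2) log₂(1+s). -/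
open Filter Real

lemma anti_aux (a x y : ℝ) (ha : 0 ≤ a) (hx : 0 < x) (hxy : x ≤ y) :
    x * Real.log (1 + 2 * y * a) ≤ y * Real.log (1 + 2 * x * a) := by
  have hy : 0 < y := lt_of_lt_of_le hx hxy
  have hp : 1 ≤ y / x := (one_le_div hx).mpr hxy
  have hax : -1 ≤ 2 * x * a := by nlinarith
  have hb := one_add_mul_self_le_rpow_one_add hax hp
  have hxy' : 1 + (y / x) * (2 * x * a) = 1 + 2 * y * a := by field_simp
  rw [hxy'] at hb
  have h1 : (0:ℝ) < 1 + 2 * y * a := by nlinarith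
  have h2 : (0:ℝ) < 1 + 2 * x * a := by nlinarith
  have hlog := Real.log_le_log h1 hb
  rw [Real.log_rpow h2] at hlog
  calc x * Real.log (1 + 2 * y * a) ≤ x * ((y / x) * Real.log (1 + 2 * x * a)) :=
        mul_le_mul_of_nonneg_left hlog hx.le
    _ = y * Real.log (1 + 2 * x * a) := by field_simp

set_option maxHeartbeats 1600000 in
lemma root_tendsto (s : ℝ) (hs : 0 < s) (E : ℝ → ℝ) (c : ℝ → ℝ)
    (hEtend : Tendsto E atTop (nhds (s * Real.log 2 / Real.log (1 + s))))
    (hc : ∀ α : ℝ, 0 < α →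
      (∃ x : ℝ, 0 < x ∧ x = (1 / 2) * Real.logb 2 (1 + 2 * x * E α)) →
      0 < c α ∧ c α = (1 / 2) * Real.logb 2 (1 + 2 * c α * E α)) :
    Tendsto c atTop (nhds ((1 / 2) * Real.logb 2 (1 + s))) := by
  have h2 : (0:ℝ) < Real.log 2 := Real.log_pos one_lt_two
  have hs1 : (1:ℝ) < 1 + s := by linarith
  have hl : 0 < Real.log (1 + s) := Real.log_pos hs1
  set L : ℝ := (1 / 2) * Real.logb 2 (1 + s) with hLdef
  have hLpos : 0 < L := by
    have := Real.logb_pos one_lt_two hs1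
    rw [hLdef]; linarith
  have key : s < (1 + s) * Real.log (1 + s) := by
    have hne : (1 + s)⁻¹ ≠ 1 := by
      intro h
      have : (1:ℝ) + s = 1 := by
        field_simp at h; linarith
      linarith
    have h := Real.log_lt_sub_one_of_pos (by positivity : (0:ℝ) < (1 + s)⁻¹) hne
    rw [Real.log_inv] at h
    have h' : 1 - (1 + s)⁻¹ < Real.log (1 + s) := by linarith
    have hinv : (1 + s) * (1 - (1 + s)⁻¹) = s := by
      field_simp
      ring
    nlinarith [h', hs1]
  set Estar : ℝ := s * Real.log 2 / Real.log (1 + s) with hEdef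
  have hE0 : 0 < Estar := by
    rw [hEdef]; exact div_pos (mul_pos hs h2) hl
  have hEL : 2 * Estar * L = s := by
    rw [hEdef, hLdef, ← Real.log_div_log]
    field_simp
  have hlog2L : 2 * L * Real.log 2 = Real.log (1 + s) := by
    rw [hLdef, ← Real.log_div_log]
    field_simp
  have h2L : Real.exp (2 * L * Real.log 2) = 1 + s := by
    rw [hlog2L, Real.exp_log (by linarith)]
  clear_value L Estar
  rw [Metric.tendsto_nhds]
  intro ε hε
  have hgt1 : (1:ℝ) < (1 + s) * Real.log (1 + s) / s := (one_lt_div hs).mpr key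
  have hT : 0 < Real.log ((1 + s) * Real.log (1 + s) / s) := Real.log_pos hgt1
  set T : ℝ := Real.log ((1 + s) * Real.log (1 + s) / s) with hTdef
  set δ : ℝ := min (min (ε / 2) (L / 2)) (T / (4 * Real.log 2)) with hδdef
  have hδ0 : 0 < δ :=
    lt_min (lt_min (by linarith) (by linarith)) (div_pos hT (by linarith))
  have hδε : δ < ε := by
    have := min_le_left (min (ε / 2) (L / 2)) (T / (4 * Real.log 2))
    have := min_le_left (ε / 2) (L / 2)
    calc δ ≤ min (ε / 2) (L / 2) := min_le_left _ _
      _ ≤ ε / 2 := min_le_left _ _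
      _ < ε := by linarith
  have hδL : δ < L := by
    calc δ ≤ min (ε / 2) (L / 2) := min_le_left _ _
      _ ≤ L / 2 := min_le_right _ _
      _ < L := by linarith
  have hδT : 2 * δ * Real.log 2 < T := by
    have h1 : δ ≤ T / (4 * Real.log 2) := min_le_right _ _
    have h4 : (0:ℝ) < 4 * Real.log 2 := by linarith
    have h3 : δ * (4 * Real.log 2) ≤ T := (le_div_iff₀ h4).mp h1
    nlinarith
  have ht0 : 0 < 2 * δ * Real.log 2 := mul_pos (by linarith) h2
  clear_value δ T
  -- key exponential estimate
  have hexpt : s < Real.exp (-(2 * δ * Real.log 2)) * ((1 + s) * Real.log (1 + s)) := by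
    have h1 : Real.exp (-T) < Real.exp (-(2 * δ * Real.log 2)) :=
      Real.exp_lt_exp.mpr (by linarith)
    have hTpos : (0:ℝ) < (1 + s) * Real.log (1 + s) / s := by positivity
    have h2'' : Real.exp (-T) = s / ((1 + s) * Real.log (1 + s)) := by
      rw [Real.exp_neg, hTdef, Real.exp_log hTpos, inv_div]
    rw [h2''] at h1
    have hpos : (0:ℝ) < (1 + s) * Real.log (1 + s) := by positivity
    exact (div_lt_iff₀ hpos).mp h1
  have hb : (2 * δ * Real.log 2) * Real.exp (-(2 * δ * Real.log 2)) ≤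
      1 - Real.exp (-(2 * δ * Real.log 2)) := by
    have h3 := Real.add_one_le_exp (2 * δ * Real.log 2)
    have h4 : Real.exp (-(2 * δ * Real.log 2)) * Real.exp (2 * δ * Real.log 2) = 1 := by
      rw [← Real.exp_add]; simp
    nlinarith [Real.exp_pos (-(2 * δ * Real.log 2))]
  have h5 : 2 * Estar * δ * Real.log (1 + s) = (2 * δ * Real.log 2) * s := by
    rw [hEdef]; field_simp
  have hAstar : Real.exp (2 * (L - δ) * Real.log 2) < 1 + 2 * (L - δ) * Estar := by
    have hsplit : Real.exp (2 * (L - δ) * Real.log 2) =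
        (1 + s) * Real.exp (-(2 * δ * Real.log 2)) := by
      rw [← h2L, ← Real.exp_add]; congr 1; ring
    have hchain : (2 * δ * Real.log 2) * s <
        (1 + s) * (1 - Real.exp (-(2 * δ * Real.log 2))) * Real.log (1 + s) := by
      have hpos : (0:ℝ) < (1 + s) * Real.log (1 + s) := by positivity
      have c1 : (1 + s) * ((2 * δ * Real.log 2) * Real.exp (-(2 * δ * Real.log 2))) *
          Real.log (1 + s) ≤
          (1 + s) * (1 - Real.exp (-(2 * δ * Real.log 2))) * Real.log (1 + s) := by
        nlinarith [hb]
      have c2 : (2 * δ * Real.log 2) * s < (2 * δ * Real.log 2) *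
          (Real.exp (-(2 * δ * Real.log 2)) * ((1 + s) * Real.log (1 + s))) :=
        mul_lt_mul_of_pos_left hexpt ht0
      have c3 : (2 * δ * Real.log 2) *
          (Real.exp (-(2 * δ * Real.log 2)) * ((1 + s) * Real.log (1 + s))) =
          (1 + s) * ((2 * δ * Real.log 2) * Real.exp (-(2 * δ * Real.log 2))) *
          Real.log (1 + s) := by ring
      linarith [c1, c2, c3.ge, c3.le]
    have h6 : 2 * Estar * δ < (1 + s) * (1 - Real.exp (-(2 * δ * Real.log 2))) := by
      have h7 : 2 * Estar * δ * Real.log (1 + s) <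
          (1 + s) * (1 - Real.exp (-(2 * δ * Real.log 2))) * Real.log (1 + s) := by
        rw [h5]; exact hchain
      exact lt_of_mul_lt_mul_right h7 hl.le
    rw [hsplit]
    nlinarith [h6, hEL]
  have hBstar : 1 + 2 * (L + δ) * Estar < Real.exp (2 * (L + δ) * Real.log 2) := by
    have hsplit2 : Real.exp (2 * (L + δ) * Real.log 2) =
        (1 + s) * Real.exp (2 * δ * Real.log 2) := by
      rw [← h2L, ← Real.exp_add]; congr 1; ring
    have he : 1 + 2 * δ * Real.log 2 < Real.exp (2 * δ * Real.log 2) := by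
      have := Real.add_one_lt_exp (x := 2 * δ * Real.log 2) ht0.ne'
      linarith
    have h8 : 2 * Estar * δ * Real.log (1 + s) <
        (1 + s) * (2 * δ * Real.log 2) * Real.log (1 + s) := by
      rw [h5]; nlinarith [key]
    have h9 : 2 * Estar * δ < (1 + s) * (2 * δ * Real.log 2) := lt_of_mul_lt_mul_right h8 hl.le
    rw [hsplit2]
    have h10 : (1 + s) * (1 + 2 * δ * Real.log 2) < (1 + s) * Real.exp (2 * δ * Real.log 2) :=
      mul_lt_mul_of_pos_left he (by linarith)
    nlinarith [h9, hEL]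
  -- eventually statements
  have htend1 : Tendsto (fun α => 1 + 2 * (L - δ) * E α) atTop
      (nhds (1 + 2 * (L - δ) * Estar)) :=
    (hEtend.const_mul (2 * (L - δ))).const_add 1
  have htend2 : Tendsto (fun α => 1 + 2 * (L + δ) * E α) atTop
      (nhds (1 + 2 * (L + δ) * Estar)) :=
    (hEtend.const_mul (2 * (L + δ))).const_add 1
  have hA : ∀ᶠ α in atTop, Real.exp (2 * (L - δ) * Real.log 2) < 1 + 2 * (L - δ) * E α :=
    htend1.eventually (eventually_gt_nhds hAstar)
  have hB : ∀ᶠ α in atTop, 1 + 2 * (L + δ) * E α < Real.exp (2 * (L + δ) * Real.log 2) :=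
    htend2.eventually (eventually_lt_nhds hBstar)
  have hEpos : ∀ᶠ α in atTop, 0 < E α := hEtend.eventually (eventually_gt_nhds hE0)
  filter_upwards [hA, hB, hEpos, eventually_gt_atTop (0:ℝ)] with α hAα hBα hEα hα0
  have hz1 : 0 < L - δ := by linarith
  have hX1pos : 0 < 1 + 2 * (L - δ) * E α := lt_trans (Real.exp_pos _) hAα
  have hX2pos : 0 < 1 + 2 * (L + δ) * E α := by nlinarith [hEα]
  have hlogA : 2 * (L - δ) * Real.log 2 < Real.log (1 + 2 * (L - δ) * E α) :=
    (Real.lt_log_iff_exp_lt hX1pos).mpr hAα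
  have hlogB : Real.log (1 + 2 * (L + δ) * E α) < 2 * (L + δ) * Real.log 2 :=
    (Real.log_lt_iff_lt_exp hX2pos).mpr hBα
  -- existence of a positive root
  have hex : ∃ x : ℝ, 0 < x ∧ x = (1 / 2) * Real.logb 2 (1 + 2 * x * E α) := by
    have hcont : ContinuousOn (fun x : ℝ => (1 / 2) * Real.logb 2 (1 + 2 * x * E α) - x)
        (Set.Icc (L - δ) (L + δ)) := by
      have hne : ∀ x ∈ Set.Icc (L - δ) (L + δ), (1:ℝ) + 2 * x * E α ≠ 0 := by
        intro x hx
        have h1 := hx.1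
        have : (0:ℝ) < 1 + 2 * x * E α := by nlinarith [hEα]
        exact this.ne'
      have hlogcont : ContinuousOn (fun x : ℝ => Real.log (1 + 2 * x * E α))
          (Set.Icc (L - δ) (L + δ)) :=
        ContinuousOn.log (Continuous.continuousOn (continuous_const.add ((continuous_const.mul continuous_id).mul continuous_const))) hne
      have h2' : ContinuousOn
          (fun x : ℝ => (1 / 2) * (Real.log (1 + 2 * x * E α) / Real.log 2) - x)
          (Set.Icc (L - δ) (L + δ)) :=
        (continuousOn_const.mul (hlogcont.div_const _)).sub continuousOn_id
      simpa [Real.log_div_log] using h2'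
    have hf2 : (1 / 2) * Real.logb 2 (1 + 2 * (L + δ) * E α) - (L + δ) ≤ 0 := by
      rw [← Real.log_div_log]
      have h' : Real.log (1 + 2 * (L + δ) * E α) / Real.log 2 < 2 * (L + δ) :=
        (div_lt_iff₀ h2).mpr (by linarith [hlogB])
      linarith
    have hf1 : 0 ≤ (1 / 2) * Real.logb 2 (1 + 2 * (L - δ) * E α) - (L - δ) := by
      rw [← Real.log_div_log]
      have h' : 2 * (L - δ) < Real.log (1 + 2 * (L - δ) * E α) / Real.log 2 :=
        (lt_div_iff₀ h2).mpr (by linarith [hlogA])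
      linarith
    obtain ⟨x, hxmem, hfx⟩ := intermediate_value_Icc' (by linarith : L - δ ≤ L + δ) hcont
      (Set.mem_Icc.mpr ⟨hf2, hf1⟩)
    have hfx' : (1 / 2) * Real.logb 2 (1 + 2 * x * E α) - x = 0 := hfx
    exact ⟨x, lt_of_lt_of_le hz1 hxmem.1, by linarith⟩
  obtain ⟨hcpos, hceq⟩ := hc α hα0 hex
  have hceq' : Real.log (1 + 2 * c α * E α) = 2 * c α * Real.log 2 := by
    rw [← Real.log_div_log] at hceq
    field_simp at hceq
    rw [show (1:ℝ) + 2 * c α * E α = 1 + c α * 2 * E α by ring]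
    linarith
  have hc1 : L - δ < c α := by
    by_contra hcon
    push_neg at hcon
    have ha := anti_aux (E α) (c α) (L - δ) hEα.le hcpos hcon
    rw [hceq'] at ha
    have hq : c α * (2 * (L - δ) * Real.log 2) < c α * Real.log (1 + 2 * (L - δ) * E α) :=
      mul_lt_mul_of_pos_left hlogA hcpos
    have heq2 : (L - δ) * (2 * c α * Real.log 2) = c α * (2 * (L - δ) * Real.log 2) := by ring
    linarith [ha, hq, heq2.le, heq2.ge]
  have hc2 : c α < L + δ := by
    by_contra hcon
    push_neg at hcon
    have ha := anti_aux (E α) (L + δ) (c α) hEα.le (by linarith) hcon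
    rw [hceq'] at ha
    have hq : c α * Real.log (1 + 2 * (L + δ) * E α) < c α * (2 * (L + δ) * Real.log 2) :=
      mul_lt_mul_of_pos_left hlogB hcpos
    have heq2 : (L + δ) * (2 * c α * Real.log 2) = c α * (2 * (L + δ) * Real.log 2) := by ring
    linarith [ha, hq, heq2.le, heq2.ge]
  rw [Real.dist_eq, abs_lt]
  constructor <;> linarith

/-- The AWGN capacity evaluated at the SNR per bit
`E(α) = 1/(2·C((1/α)·ln(1+s))·(α/s))` of the modified SIC receiver converges, as
`α → ∞`, to the limiting spectral efficiency `(1/2)·log₂(1+s)`. Here `c α` is any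
choice of a positive root of `c = (1/2)·log₂(1 + 2·c·E(α))` whenever such a root
exists, and `C` satisfies Gallager's bound on `(0,1)`. -/
theorem awgn_capacity_limit (s A₁ A₂ : ℝ) (hs : 0 < s) (hA : A₁ ≤ A₂) (C : ℝ → ℝ)
    (hC : ∀ γ ∈ Set.Ioo (0 : ℝ) 1,
      γ / (2 * Real.log 2) + A₁ * γ ^ 2 ≤ C γ ∧ C γ ≤ γ / (2 * Real.log 2) + A₂ * γ ^ 2)
    (c : ℝ → ℝ)
    (hc : ∀ α : ℝ, 0 < α →
      (∃ x : ℝ, 0 < x ∧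
        x = (1 / 2) * Real.logb 2
              (1 + 2 * x * (1 / (2 * C ((1 / α) * Real.log (1 + s)) * (α / s))))) →
      0 < c α ∧
        c α = (1 / 2) * Real.logb 2
              (1 + 2 * c α * (1 / (2 * C ((1 / α) * Real.log (1 + s)) * (α / s))))) :
    Tendsto c atTop (nhds ((1 / 2) * Real.logb 2 (1 + s))) := by
  have h2 : (0:ℝ) < Real.log 2 := Real.log_pos one_lt_two
  have hs1 : (1:ℝ) < 1 + s := by linarith
  have hl : 0 < Real.log (1 + s) := Real.log_pos hs1
  have hDlim : Tendsto (fun α : ℝ => 2 * C ((1 / α) * Real.log (1 + s)) * (α / s)) atTop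
      (nhds (Real.log (1 + s) / (s * Real.log 2))) := by
    have hbnd : ∀ A : ℝ, Tendsto (fun α : ℝ =>
        Real.log (1 + s) / (s * Real.log 2) + 2 * A * (Real.log (1 + s)) ^ 2 / s * α⁻¹)
        atTop (nhds (Real.log (1 + s) / (s * Real.log 2))) := by
      intro A
      have h1 : Tendsto (fun α : ℝ => 2 * A * (Real.log (1 + s)) ^ 2 / s * α⁻¹) atTop
          (nhds 0) := by
        have h0 := tendsto_inv_atTop_zero.const_mul (2 * A * (Real.log (1 + s)) ^ 2 / s)
        rw [mul_zero] at h0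
        exact h0
      simpa using (tendsto_const_nhds (x := Real.log (1 + s) / (s * Real.log 2))
        (f := atTop)).add h1
    refine tendsto_of_tendsto_of_tendsto_of_le_of_le' (hbnd A₁) (hbnd A₂) ?_ ?_
    · filter_upwards [eventually_gt_atTop (max 0 (Real.log (1 + s)))] with α hα
      have hα0 : (0:ℝ) < α := lt_of_le_of_lt (le_max_left _ _) hα
      have hαl : Real.log (1 + s) < α := lt_of_le_of_lt (le_max_right _ _) hα
      have hγ : (1 / α) * Real.log (1 + s) ∈ Set.Ioo (0:ℝ) 1 := by
        constructor
        · exact mul_pos (by positivity) hl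
        · rw [one_div_mul_eq_div]
          exact (div_lt_one hα0).mpr hαl
      have hlow := (hC _ hγ).1
      have hid : 2 * ((1 / α) * Real.log (1 + s) / (2 * Real.log 2) +
          A₁ * ((1 / α) * Real.log (1 + s)) ^ 2) * (α / s) =
          Real.log (1 + s) / (s * Real.log 2) + 2 * A₁ * (Real.log (1 + s)) ^ 2 / s * α⁻¹ := by
        field_simp
      calc Real.log (1 + s) / (s * Real.log 2) + 2 * A₁ * (Real.log (1 + s)) ^ 2 / s * α⁻¹
          = 2 * ((1 / α) * Real.log (1 + s) / (2 * Real.log 2) +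
            A₁ * ((1 / α) * Real.log (1 + s)) ^ 2) * (α / s) := hid.symm
        _ ≤ 2 * C ((1 / α) * Real.log (1 + s)) * (α / s) := by
            have hαs : (0:ℝ) ≤ α / s := le_of_lt (div_pos hα0 hs)
            have := mul_le_mul_of_nonneg_left hlow (by norm_num : (0:ℝ) ≤ 2)
            exact mul_le_mul_of_nonneg_right this hαs
    · filter_upwards [eventually_gt_atTop (max 0 (Real.log (1 + s)))] with α hα
      have hα0 : (0:ℝ) < α := lt_of_le_of_lt (le_max_left _ _) hα
      have hαl : Real.log (1 + s) < α := lt_of_le_of_lt (le_max_right _ _) hα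
      have hγ : (1 / α) * Real.log (1 + s) ∈ Set.Ioo (0:ℝ) 1 := by
        constructor
        · exact mul_pos (by positivity) hl
        · rw [one_div_mul_eq_div]
          exact (div_lt_one hα0).mpr hαl
      have hhigh := (hC _ hγ).2
      have hid : 2 * ((1 / α) * Real.log (1 + s) / (2 * Real.log 2) +
          A₂ * ((1 / α) * Real.log (1 + s)) ^ 2) * (α / s) =
          Real.log (1 + s) / (s * Real.log 2) + 2 * A₂ * (Real.log (1 + s)) ^ 2 / s * α⁻¹ := by
        field_simp
      calc 2 * C ((1 / α) * Real.log (1 + s)) * (α / s)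
          ≤ 2 * ((1 / α) * Real.log (1 + s) / (2 * Real.log 2) +
            A₂ * ((1 / α) * Real.log (1 + s)) ^ 2) * (α / s) := by
            have hαs : (0:ℝ) ≤ α / s := le_of_lt (div_pos hα0 hs)
            have := mul_le_mul_of_nonneg_left hhigh (by norm_num : (0:ℝ) ≤ 2)
            exact mul_le_mul_of_nonneg_right this hαs
        _ = Real.log (1 + s) / (s * Real.log 2) + 2 * A₂ * (Real.log (1 + s)) ^ 2 / s * α⁻¹ :=
            hid
  have hEtend : Tendsto (fun α : ℝ => 1 / (2 * C ((1 / α) * Real.log (1 + s)) * (α / s)))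
      atTop (nhds (s * Real.log 2 / Real.log (1 + s))) := by
    have hKpos : (0:ℝ) < Real.log (1 + s) / (s * Real.log 2) :=
      div_pos hl (mul_pos hs h2)
    have := hDlim.inv₀ hKpos.ne'
    simpa [one_div, inv_div] using this
  exact root_tendsto s hs _ c hEtend hc
end

section
/- Let α > 0, σ² > 0, and let x₀ : ℝ → ℝ be given by x₀(t) = α t + α/2 + σ² for t ∈ [-1/2, 1/2] and x₀(t) = α + σ² for t > 1/2, and set z₁(t) = ∫_{-1/2}^{1/2} dτ / x₀(t+τ). Then z₁ is strictly convex and strictly decreasing on [0, 1/2], and for every δ ∈ (0, 1/2] and every t ∈ [0, δ), z₁(t) > (1/α) ln((α+σ²)/σ²) − (α/(σ²(α+σ²))) · δ. -/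
open Set intervalIntegral

/-- Derivative of the explicit profile `F t = (1/α)(log(α+σ²) − log(αt+σ²)) + t/(α+σ²)`. -/
lemma sinr_aux_hasDerivAt (α σ2 : ℝ) (hα : 0 < α) (t : ℝ) (ht : 0 < α * t + σ2) :
    HasDerivAt (fun t : ℝ => (1 / α) * (Real.log (α + σ2) - Real.log (α * t + σ2)) + t / (α + σ2))
      (1 / (α + σ2) - 1 / (α * t + σ2)) t := by
  have h1 : HasDerivAt (fun t : ℝ => α * t + σ2) α t := by
    simpa using ((hasDerivAt_id t).const_mul α).add_const σ2
  have h2 : HasDerivAt (fun t : ℝ => Real.log (α * t + σ2)) (α / (α * t + σ2)) t :=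
    h1.log ht.ne'
  have h3 := (((hasDerivAt_const t (Real.log (α + σ2))).sub h2).const_mul (1 / α)).add
    ((hasDerivAt_id t).div_const (α + σ2))
  refine h3.congr_deriv ?_
  field_simp
  ring

/-- The integral `∫ τ in [-1/2,1/2], 1/x₀(t+τ)` equals the explicit profile for `t ∈ [0,1/2]`. -/
lemma sinr_aux_formula (α σ2 : ℝ) (hα : 0 < α) (hσ : 0 < σ2)
    (x₀ : ℝ → ℝ)
    (hx1 : ∀ t ∈ Set.Icc (-(1 / 2) : ℝ) (1 / 2), x₀ t = α * t + α / 2 + σ2)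
    (hx2 : ∀ t : ℝ, (1 / 2 : ℝ) < t → x₀ t = α + σ2)
    (t : ℝ) (ht : t ∈ Set.Icc (0 : ℝ) (1 / 2)) :
    (∫ τ in (-(1 / 2) : ℝ)..(1 / 2), 1 / x₀ (t + τ))
      = (1 / α) * (Real.log (α + σ2) - Real.log (α * t + σ2)) + t / (α + σ2) := by
  obtain ⟨ht0, ht2⟩ := ht
  set g : ℝ → ℝ := fun τ => 1 / (α * min (t + τ) (1 / 2) + α / 2 + σ2) with hg
  have hcong : Set.EqOn (fun τ => 1 / x₀ (t + τ)) g (Set.uIcc (-(1 / 2) : ℝ) (1 / 2)) := by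
    intro τ hτ
    rw [Set.uIcc_of_le (by norm_num)] at hτ
    obtain ⟨hτ1, hτ2⟩ := hτ
    by_cases hc : t + τ ≤ 1 / 2
    · simp only [g]
      rw [hx1 (t + τ) ⟨by linarith, hc⟩, min_eq_left hc]
    · push_neg at hc
      simp only [g]
      rw [hx2 (t + τ) hc, min_eq_right hc.le,
        show α * (1 / 2) + α / 2 + σ2 = α + σ2 from by ring]
  rw [intervalIntegral.integral_congr hcong]
  -- continuity of g on [-1/2, 1/2]
  have hden : ∀ τ ∈ Set.Icc (-(1 / 2) : ℝ) (1 / 2), 0 < α * min (t + τ) (1 / 2) + α / 2 + σ2 := by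
    intro τ hτ
    have hmin : -(1 / 2) ≤ min (t + τ) (1 / 2) := le_min (by linarith [hτ.1]) (by norm_num)
    have := mul_le_mul_of_nonneg_left hmin hα.le
    linarith
  have hgc : ContinuousOn g (Set.Icc (-(1 / 2) : ℝ) (1 / 2)) := by
    apply ContinuousOn.div continuousOn_const
    · exact Continuous.continuousOn
        (((continuous_const.mul
            ((continuous_const.add continuous_id).min continuous_const)).add continuous_const).add
            continuous_const)
    · intro τ hτ; exact (hden τ hτ).ne'
  have hsub1 : Set.uIcc (-(1 / 2) : ℝ) (1 / 2 - t) ⊆ Set.Icc (-(1 / 2) : ℝ) (1 / 2) := by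
    rw [Set.uIcc_of_le (by linarith)]
    exact Set.Icc_subset_Icc le_rfl (by linarith)
  have hsub2 : Set.uIcc ((1 / 2 : ℝ) - t) (1 / 2) ⊆ Set.Icc (-(1 / 2) : ℝ) (1 / 2) := by
    rw [Set.uIcc_of_le (by linarith)]
    exact Set.Icc_subset_Icc (by linarith) le_rfl
  have hi1 : IntervalIntegrable g MeasureTheory.volume (-(1 / 2) : ℝ) (1 / 2 - t) :=
    (hgc.mono hsub1).intervalIntegrable
  have hi2 : IntervalIntegrable g MeasureTheory.volume ((1 / 2 : ℝ) - t) (1 / 2) :=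
    (hgc.mono hsub2).intervalIntegrable
  rw [← intervalIntegral.integral_add_adjacent_intervals hi1 hi2]
  have h2val : (∫ τ in ((1 / 2 : ℝ) - t)..(1 / 2), g τ) = t / (α + σ2) := by
    have heq : Set.EqOn g (fun _ => 1 / (α + σ2)) (Set.uIcc ((1 / 2 : ℝ) - t) (1 / 2)) := by
      intro τ hτ
      rw [Set.uIcc_of_le (by linarith)] at hτ
      simp only [g]
      rw [min_eq_right (by linarith [hτ.1]),
        show α * (1 / 2) + α / 2 + σ2 = α + σ2 from by ring]
    rw [intervalIntegral.integral_congr heq, intervalIntegral.integral_const, smul_eq_mul]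
    ring
  have h1val : (∫ τ in (-(1 / 2) : ℝ)..(1 / 2 - t), g τ)
      = (1 / α) * (Real.log (α + σ2) - Real.log (α * t + σ2)) := by
    have heq : Set.EqOn g (fun τ => 1 / (α * (t + τ) + α / 2 + σ2))
        (Set.uIcc (-(1 / 2) : ℝ) (1 / 2 - t)) := by
      intro τ hτ
      rw [Set.uIcc_of_le (by linarith)] at hτ
      simp only [g]
      rw [min_eq_left (by linarith [hτ.2])]
    rw [intervalIntegral.integral_congr heq]
    have hpos : ∀ τ ∈ Set.uIcc (-(1 / 2) : ℝ) (1 / 2 - t), 0 < α * (t + τ) + α / 2 + σ2 := by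
      intro τ hτ
      rw [Set.uIcc_of_le (by linarith)] at hτ
      nlinarith [hτ.1, hτ.2]
    have hkey : ∀ τ ∈ Set.uIcc (-(1 / 2) : ℝ) (1 / 2 - t),
        HasDerivAt (fun τ : ℝ => (1 / α) * Real.log (α * (t + τ) + α / 2 + σ2))
          (1 / (α * (t + τ) + α / 2 + σ2)) τ := by
      intro τ hτ
      have hd : HasDerivAt (fun τ : ℝ => α * (t + τ) + α / 2 + σ2) α τ := by
        simpa using ((((hasDerivAt_id τ).const_add t).const_mul α).add_const (α / 2)).add_const σ2
      have hl := (hd.log (hpos τ hτ).ne').const_mul (1 / α)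
      refine hl.congr_deriv ?_
      field_simp
    have hint : IntervalIntegrable (fun τ => 1 / (α * (t + τ) + α / 2 + σ2))
        MeasureTheory.volume (-(1 / 2) : ℝ) (1 / 2 - t) := by
      apply ContinuousOn.intervalIntegrable
      apply ContinuousOn.div continuousOn_const
      · exact Continuous.continuousOn
          ((((continuous_const.mul (continuous_const.add continuous_id)).add continuous_const).add
              continuous_const))
      · intro τ hτ; exact (hpos τ hτ).ne'
    rw [intervalIntegral.integral_eq_sub_of_hasDerivAt hkey hint]
    rw [show α * (t + (1 / 2 - t)) + α / 2 + σ2 = α + σ2 by ring,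
        show α * (t + -(1 / 2)) + α / 2 + σ2 = α * t + σ2 by ring]
    ring
  rw [h1val, h2val]

/-- The first-iteration SINR profile `z₁(t) = ∫_{-1/2}^{1/2} dτ / x₀(t+τ)` is
strictly convex and strictly decreasing on `[0, 1/2]`, and for every
`δ ∈ (0, 1/2]` and `t ∈ [0, δ)` it exceeds the threshold
`(1/α)ln((α+σ²)/σ²) − (α/(σ²(α+σ²)))·δ`. -/
theorem sinr_profile_convex_decreasing (α σ2 : ℝ) (hα : 0 < α) (hσ : 0 < σ2)
    (x₀ : ℝ → ℝ)
    (hx1 : ∀ t ∈ Set.Icc (-(1 / 2) : ℝ) (1 / 2), x₀ t = α * t + α / 2 + σ2)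
    (hx2 : ∀ t : ℝ, (1 / 2 : ℝ) < t → x₀ t = α + σ2) :
    StrictConvexOn ℝ (Set.Icc (0 : ℝ) (1 / 2))
        (fun t : ℝ => ∫ τ in (-(1 / 2) : ℝ)..(1 / 2), 1 / x₀ (t + τ)) ∧
      StrictAntiOn (fun t : ℝ => ∫ τ in (-(1 / 2) : ℝ)..(1 / 2), 1 / x₀ (t + τ))
        (Set.Icc (0 : ℝ) (1 / 2)) ∧
      ∀ δ ∈ Set.Ioc (0 : ℝ) (1 / 2), ∀ t ∈ Set.Ico (0 : ℝ) δ,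
        (1 / α) * Real.log ((α + σ2) / σ2) - (α / (σ2 * (α + σ2))) * δ
          < ∫ τ in (-(1 / 2) : ℝ)..(1 / 2), 1 / x₀ (t + τ) := by
  set F : ℝ → ℝ := fun t =>
    (1 / α) * (Real.log (α + σ2) - Real.log (α * t + σ2)) + t / (α + σ2) with hFdef
  have hz : ∀ t ∈ Set.Icc (0 : ℝ) (1 / 2),
      (∫ τ in (-(1 / 2) : ℝ)..(1 / 2), 1 / x₀ (t + τ)) = F t :=
    fun t ht => sinr_aux_formula α σ2 hα hσ x₀ hx1 hx2 t ht
  have hde : ∀ t : ℝ, 0 < α * t + σ2 →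
      HasDerivAt F (1 / (α + σ2) - 1 / (α * t + σ2)) t :=
    fun t ht => sinr_aux_hasDerivAt α σ2 hα t ht
  have hαs : 0 < α + σ2 := by linarith
  have hposIcc : ∀ t ∈ Set.Icc (0 : ℝ) (1 / 2), 0 < α * t + σ2 := by
    intro t ht; nlinarith [ht.1]
  have hU : IsOpen {t : ℝ | 0 < α * t + σ2} :=
    isOpen_lt continuous_const ((continuous_const.mul continuous_id).add continuous_const)
  have hFcont : ContinuousOn F (Set.Icc (0 : ℝ) (1 / 2)) := fun x hx =>
    ((hde x (hposIcc x hx)).continuousAt).continuousWithinAt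
  -- strict convexity of F
  have hFconv : StrictConvexOn ℝ (Set.Icc (0 : ℝ) (1 / 2)) F := by
    apply strictConvexOn_of_deriv2_pos (convex_Icc 0 (1 / 2)) hFcont
    intro x hx
    rw [interior_Icc] at hx
    have hxpos : 0 < α * x + σ2 := by nlinarith [hx.1]
    have hmem : x ∈ {t : ℝ | 0 < α * t + σ2} := hxpos
    have hev : deriv F =ᶠ[nhds x] fun t => 1 / (α + σ2) - 1 / (α * t + σ2) := by
      filter_upwards [hU.mem_nhds hmem] with t ht
      exact (hde t ht).deriv
    have hG : HasDerivAt (fun t : ℝ => 1 / (α + σ2) - 1 / (α * t + σ2))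
        (α / (α * x + σ2) ^ 2) x := by
      have h1 : HasDerivAt (fun t : ℝ => α * t + σ2) α x := by
        simpa using ((hasDerivAt_id x).const_mul α).add_const σ2
      have h2 := (hasDerivAt_const x ((α + σ2)⁻¹)).sub (h1.inv hxpos.ne')
      simp only [one_div]
      refine h2.congr_deriv ?_
      ring
    have : deriv (deriv F) x = α / (α * x + σ2) ^ 2 := by
      rw [hev.deriv_eq]
      exact hG.deriv
    simp only [Function.iterate_succ, Function.iterate_zero, Function.comp_apply, id_eq]
    rw [this]
    positivity
  -- strict antitonicity of F
  have hFanti : StrictAntiOn F (Set.Icc (0 : ℝ) (1 / 2)) := by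
    apply strictAntiOn_of_deriv_neg (convex_Icc 0 (1 / 2)) hFcont
    intro x hx
    rw [interior_Icc] at hx
    have hxpos : 0 < α * x + σ2 := by nlinarith [hx.1]
    rw [(hde x hxpos).deriv]
    have hlt : α * x + σ2 < α + σ2 := by nlinarith [hx.2]
    have := one_div_lt_one_div_of_lt hxpos hlt
    linarith
  refine ⟨?_, ?_, ?_⟩
  · refine ⟨convex_Icc 0 (1 / 2), fun {x} hx {y} hy hxy {a} {b} ha hb hab => ?_⟩
    have hmem : a • x + b • y ∈ Set.Icc (0 : ℝ) (1 / 2) :=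
      (convex_Icc 0 (1 / 2)) hx hy ha.le hb.le hab
    simp only [smul_eq_mul] at hmem ⊢
    rw [hz _ hmem, hz _ hx, hz _ hy]
    have := hFconv.2 hx hy hxy ha hb hab
    simpa using this
  · intro x hx y hy hxy
    simp only []
    rw [hz _ hx, hz _ hy]
    exact hFanti hx hy hxy
  · rintro δ ⟨hδ0, hδ2⟩ t ⟨ht0, htδ⟩
    have htIcc : t ∈ Set.Icc (0 : ℝ) (1 / 2) := ⟨ht0, by linarith⟩
    rw [hz t htIcc]
    have hxpos : 0 < α * t + σ2 := by nlinarith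
    -- log bound : log(αt+σ²) - log σ² ≤ αt/σ²
    have hlog : Real.log (α * t + σ2) - Real.log σ2 ≤ α * t / σ2 := by
      rw [← Real.log_div hxpos.ne' hσ.ne']
      have h := Real.log_le_sub_one_of_pos (show 0 < (α * t + σ2) / σ2 by positivity)
      have : (α * t + σ2) / σ2 - 1 = α * t / σ2 := by field_simp; ring
      linarith
    rw [Real.log_div hαs.ne' hσ.ne']
    have hc : 0 < α / (σ2 * (α + σ2)) := by positivity
    have hct : α / (σ2 * (α + σ2)) * t < α / (σ2 * (α + σ2)) * δ :=
      mul_lt_mul_of_pos_left htδ hc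
    have h1 : (1 / α) * (α * t / σ2) = t / σ2 := by field_simp
    have h2 : t / σ2 = t / (α + σ2) + α / (σ2 * (α + σ2)) * t := by
      field_simp
      ring
    have h3 : (1 / α) * (Real.log (α * t + σ2) - Real.log σ2) ≤ t / σ2 := by
      rw [← h1]
      apply mul_le_mul_of_nonneg_left hlog (by positivity)
    simp only [F]
    nlinarith [h3, hct, h2]
end

section
/- Define g : [0,∞) → ℝ by g(a) = E[(1 − tanh(a + ξ√a))²], where ξ is a standard normal random variable. Then g(0) = 1, g is strictly decreasing on [0,∞), and lim_{a → ∞} g(a) = 0. -/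
open Filter

/-- The mean squared error of the tanh (conditional-expectation) estimator of a
BPSK bit at SINR `a`: `g(a) = E[(1 − tanh(a + ξ√a))²]`, `ξ ~ N(0,1)`. -/
noncomputable def gMSE (a : ℝ) : ℝ :=
  ∫ x, (1 - Real.tanh (a + x * Real.sqrt a)) ^ 2 ∂(ProbabilityTheory.gaussianReal 0 1)

open Real MeasureTheory ProbabilityTheory
open scoped NNReal ENNReal

namespace GMSEAux

/-! ### tanh lemmas -/

lemma one_sub_tanh (x : ℝ) : 1 - Real.tanh x = 2 / (Real.exp (2 * x) + 1) := by
  have h2 : Real.exp (2 * x) = Real.exp x * Real.exp x := by rw [two_mul, Real.exp_add]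
  have hx : (0:ℝ) < Real.exp x := Real.exp_pos x
  rw [Real.tanh_eq_sinh_div_cosh, Real.sinh_eq, Real.cosh_eq, Real.exp_neg, h2]
  have hden : Real.exp x + (Real.exp x)⁻¹ ≠ 0 := by positivity
  have hden2 : Real.exp x * Real.exp x + 1 ≠ 0 := by positivity
  field_simp
  ring

lemma one_add_tanh (x : ℝ) : 1 + Real.tanh x = 2 * Real.exp (2 * x) / (Real.exp (2 * x) + 1) := by
  have h := one_sub_tanh x
  have hpos : (0:ℝ) < Real.exp (2 * x) + 1 := by positivity
  field_simp at h ⊢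
  linarith

lemma one_sub_tanh_pos (x : ℝ) : 0 < 1 - Real.tanh x := by
  rw [one_sub_tanh]; positivity

lemma one_add_tanh_pos (x : ℝ) : 0 < 1 + Real.tanh x := by
  rw [one_add_tanh]; positivity

lemma one_sub_tanh_sq_pos (x : ℝ) : 0 < 1 - Real.tanh x ^ 2 := by
  nlinarith [one_sub_tanh_pos x, one_add_tanh_pos x]

lemma one_sub_tanh_le_two (x : ℝ) : 1 - Real.tanh x ≤ 2 := by
  nlinarith [one_add_tanh_pos x]

lemma one_sub_tanh_sq_le_one (x : ℝ) : 1 - Real.tanh x ^ 2 ≤ 1 := by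
  nlinarith [sq_nonneg (Real.tanh x)]

lemma exp_tanh_id (y : ℝ) : Real.exp (-(2 * y)) * (1 + Real.tanh y) = 1 - Real.tanh y := by
  rw [one_sub_tanh, one_add_tanh, Real.exp_neg]
  have hpos : (0:ℝ) < Real.exp (2 * y) + 1 := by positivity
  have he : Real.exp (2 * y) ≠ 0 := (Real.exp_pos _).ne'
  field_simp

lemma continuous_tanh : Continuous Real.tanh := by
  have : Real.tanh = fun y => Real.sinh y / Real.cosh y :=
    funext fun y => Real.tanh_eq_sinh_div_cosh y
  rw [this]
  exact Real.continuous_sinh.div Real.continuous_cosh fun x => (Real.cosh_pos x).ne'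

lemma hasDerivAt_tanh (x : ℝ) : HasDerivAt Real.tanh (1 - Real.tanh x ^ 2) x := by
  have hc : Real.cosh x ≠ 0 := (Real.cosh_pos x).ne'
  have h := (Real.hasDerivAt_sinh x).div (Real.hasDerivAt_cosh x) hc
  have heq : Real.tanh = fun y => Real.sinh y / Real.cosh y :=
    funext fun y => Real.tanh_eq_sinh_div_cosh y
  rw [heq]
  refine h.congr_deriv ?_
  simp only
  have hsq := Real.cosh_sq x
  field_simp

lemma tendsto_one_sub_tanh : Tendsto (fun y => 1 - Real.tanh y) atTop (nhds 0) := by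
  simp only [one_sub_tanh]
  apply Tendsto.div_atTop (tendsto_const_nhds (x := (2:ℝ)))
  apply tendsto_atTop_add_const_right
  exact Real.tendsto_exp_atTop.comp (tendsto_id.const_mul_atTop two_pos)


lemma pdf01 (x : ℝ) :
    gaussianPDFReal 0 1 x = (Real.sqrt (2 * π))⁻¹ * Real.exp (-x ^ 2 / 2) := by
  simp [gaussianPDFReal]

lemma pdf01_pos (x : ℝ) : 0 < gaussianPDFReal 0 1 x :=
  gaussianPDFReal_pos 0 1 x one_ne_zero

lemma gauss_int (f : ℝ → ℝ) :
    ∫ x, f x ∂(gaussianReal 0 1) = ∫ x, gaussianPDFReal 0 1 x * f x := by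
  rw [gaussianReal_of_var_ne_zero 0 one_ne_zero, gaussianPDF_def]
  have h : (fun x => ENNReal.ofReal (gaussianPDFReal 0 1 x))
      = fun x => ((Real.toNNReal (gaussianPDFReal 0 1 x) : ℝ≥0) : ℝ≥0∞) := rfl
  rw [h, integral_withDensity_eq_integral_smul (measurable_gaussianPDFReal 0 1).real_toNNReal f]
  congr 1
  ext x
  rw [NNReal.smul_def, smul_eq_mul, Real.coe_toNNReal _ (gaussianPDFReal_nonneg 0 1 x)]

lemma gauss_integrable_iff {f : ℝ → ℝ} :
    Integrable f (gaussianReal 0 1) ↔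
      Integrable (fun x => gaussianPDFReal 0 1 x * f x) volume := by
  rw [gaussianReal_of_var_ne_zero 0 one_ne_zero, gaussianPDF_def]
  have h : (fun x => ENNReal.ofReal (gaussianPDFReal 0 1 x))
      = fun x => ((Real.toNNReal (gaussianPDFReal 0 1 x) : ℝ≥0) : ℝ≥0∞) := rfl
  rw [h, integrable_withDensity_iff_integrable_smul (measurable_gaussianPDFReal 0 1).real_toNNReal]
  constructor <;> intro hi <;> refine hi.congr (Eventually.of_forall fun x => ?_) <;>
    simp only [NNReal.smul_def, smul_eq_mul, Real.coe_toNNReal _ (gaussianPDFReal_nonneg 0 1 x)]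

lemma integrable_abs_gauss : Integrable (fun x => |x|) (gaussianReal 0 1) := by
  rw [gauss_integrable_iff]
  have base : Integrable (fun x : ℝ => x * Real.exp (-(1/2) * x ^ 2)) :=
    integrable_mul_exp_neg_mul_sq (by norm_num)
  have := (base.abs.const_mul ((Real.sqrt (2 * π))⁻¹))
  refine this.congr (Eventually.of_forall fun x => ?_)
  simp only [pdf01, abs_mul, abs_of_pos (Real.exp_pos _)]
  ring_nf

lemma integrable_of_bounded_gauss {f : ℝ → ℝ} (hm : AEStronglyMeasurable f (gaussianReal 0 1))
    {C : ℝ} (hC : ∀ x, ‖f x‖ ≤ C) : Integrable f (gaussianReal 0 1) :=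
  (integrable_const C).mono' hm (Eventually.of_forall hC)

/-- pointwise reflection identity for the standard normal density -/
lemma pdf_ratio {a : ℝ} (ha : 0 < a) (x : ℝ) :
    gaussianPDFReal 0 1 (-x + -(2 * Real.sqrt a)) =
      gaussianPDFReal 0 1 x * Real.exp (-(2 * (a + x * Real.sqrt a))) := by
  have hs : Real.sqrt a ^ 2 = a := Real.sq_sqrt ha.le
  rw [pdf01, pdf01, mul_assoc, ← Real.exp_add]
  have harg : (-(-x + -(2 * Real.sqrt a)) ^ 2 / 2) = -x ^ 2 / 2 + -(2 * (a + x * Real.sqrt a)) := by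
    linear_combination (-2 : ℝ) * hs
  rw [harg]

lemma integral_comp_affine (c : ℝ) (f : ℝ → ℝ) :
    ∫ x, f (-x + -c) = ∫ x, f x := by
  have hmp : MeasurePreserving (fun x : ℝ => -x + -c) volume volume :=
    (measurePreserving_add_right volume (-c)).comp (Measure.measurePreserving_neg _)
  have hemb : MeasurableEmbedding (fun x : ℝ => -x + -c) :=
    (((Homeomorph.neg ℝ).trans (Homeomorph.addRight (-c))).measurableEmbedding)
  exact hmp.integral_comp hemb f

lemma integrable_comp_affine {c : ℝ} {f : ℝ → ℝ} (hf : Integrable f volume) (hm : AEStronglyMeasurable f volume) :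
    Integrable (fun x => f (-x + -c)) volume := by
  have hmp : MeasurePreserving (fun x : ℝ => -x + -c) volume volume :=
    (measurePreserving_add_right volume (-c)).comp (Measure.measurePreserving_neg _)
  exact (hmp.integrable_comp hm).2 hf


noncomputable def Pfun (a x : ℝ) : ℝ :=
  2 * (1 - Real.tanh (a + x * Real.sqrt a)) * (1 - Real.tanh (a + x * Real.sqrt a) ^ 2) *
    (1 + x / (2 * Real.sqrt a))


lemma hasDeriv_F (x : ℝ) {a : ℝ} (ha : 0 < a) :
    HasDerivAt (fun b => (1 - Real.tanh (b + x * Real.sqrt b)) ^ 2) (-(Pfun a x)) a := by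
  have h1 : HasDerivAt (fun b : ℝ => b + x * Real.sqrt b)
      (1 + x * (1 / (2 * Real.sqrt a))) a :=
    (hasDerivAt_id a).add ((Real.hasDerivAt_sqrt ha.ne').const_mul x)
  have h2 := (hasDerivAt_tanh (a + x * Real.sqrt a)).comp a h1
  have h3 := (h2.const_sub 1).pow 2
  refine h3.congr_deriv ?_
  simp only [Pfun, Function.comp_apply, Nat.cast_ofNat, pow_one]
  ring

lemma continuous_F_x (a : ℝ) :
    Continuous (fun x => (1 - Real.tanh (a + x * Real.sqrt a)) ^ 2) :=
  ((continuous_const.sub (continuous_tanh.comp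
    (continuous_const.add (continuous_id.mul continuous_const)))).pow 2)

lemma continuous_P_x (a : ℝ) : Continuous (fun x => Pfun a x) := by
  have h0 : Continuous fun x : ℝ => Real.tanh (a + x * Real.sqrt a) :=
    continuous_tanh.comp (continuous_const.add (continuous_id.mul continuous_const))
  exact ((continuous_const.mul (continuous_const.sub h0)).mul
    (continuous_const.sub (h0.pow 2))).mul
    (continuous_const.add (continuous_id.div_const _))


lemma continuous_pdf01 : Continuous (gaussianPDFReal 0 1) := by
  have h : gaussianPDFReal 0 1 = fun x => (Real.sqrt (2 * π))⁻¹ * Real.exp (-x ^ 2 / 2) :=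
    funext pdf01
  rw [h]
  exact continuous_const.mul (Real.continuous_exp.comp (by continuity))

lemma P_identity {a : ℝ} (ha : 0 < a) (x : ℝ) :
    Pfun a x + Real.exp (-(2 * (a + x * Real.sqrt a))) * Pfun a (-x + -(2 * Real.sqrt a)) =
      2 * (1 - Real.tanh (a + x * Real.sqrt a)) ^ 2 * (1 + Real.tanh (a + x * Real.sqrt a)) := by
  have hs : 0 < Real.sqrt a := Real.sqrt_pos.2 ha
  have hs2 : Real.sqrt a ^ 2 = a := Real.sq_sqrt ha.le
  have hy : a + (-x + -(2 * Real.sqrt a)) * Real.sqrt a = -(a + x * Real.sqrt a) := by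
    linear_combination (-2 : ℝ) * hs2
  unfold Pfun
  rw [hy, Real.tanh_neg]
  have hE := exp_tanh_id (a + x * Real.sqrt a)
  have hfrac : 1 + (-x + -(2 * Real.sqrt a)) / (2 * Real.sqrt a) = -(x / (2 * Real.sqrt a)) := by
    field_simp
    ring
  rw [hfrac]
  set t := Real.tanh (a + x * Real.sqrt a)
  linear_combination (-(2 : ℝ) * (1 - t ^ 2) * (x / (2 * Real.sqrt a))) * hE

lemma int_P_pos {a : ℝ} (ha : 0 < a)
    (hInt : Integrable (fun x => Pfun a x) (gaussianReal 0 1)) :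
    0 < ∫ x, Pfun a x ∂(gaussianReal 0 1) := by
  rw [gauss_int]
  set G : ℝ → ℝ := fun x => gaussianPDFReal 0 1 x * Pfun a x with hG
  have hGcont : Continuous G := continuous_pdf01.mul (continuous_P_x a)
  have hGint : Integrable G volume := gauss_integrable_iff.1 hInt
  have hGσint : Integrable (fun x => G (-x + -(2 * Real.sqrt a))) volume :=
    integrable_comp_affine hGint hGcont.aestronglyMeasurable
  have hσeq : ∫ x, G (-x + -(2 * Real.sqrt a)) = ∫ x, G x :=
    integral_comp_affine (2 * Real.sqrt a) G
  have key : ∀ x, G x + G (-x + -(2 * Real.sqrt a)) =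
      gaussianPDFReal 0 1 x * (2 * (1 - Real.tanh (a + x * Real.sqrt a)) ^ 2 *
        (1 + Real.tanh (a + x * Real.sqrt a))) := by
    intro x
    have hσ : G (-x + -(2 * Real.sqrt a)) =
        gaussianPDFReal 0 1 x * (Real.exp (-(2 * (a + x * Real.sqrt a))) *
          Pfun a (-x + -(2 * Real.sqrt a))) := by
      simp only [hG]
      rw [pdf_ratio ha x]
      ring
    rw [hσ, hG]
    simp only
    rw [← mul_add, P_identity ha x]
  have hposx : ∀ x, 0 < G x + G (-x + -(2 * Real.sqrt a)) := by
    intro x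
    rw [key x]
    have h1 := one_sub_tanh_pos (a + x * Real.sqrt a)
    have h2 := one_add_tanh_pos (a + x * Real.sqrt a)
    have h3 := pdf01_pos x
    positivity
  have hsum_int : Integrable (fun x => G x + G (-x + -(2 * Real.sqrt a))) volume :=
    hGint.add hGσint
  have hpos : 0 < ∫ x, (G x + G (-x + -(2 * Real.sqrt a))) := by
    rw [integral_pos_iff_support_of_nonneg (fun x => (hposx x).le) hsum_int]
    have hsupp : Function.support (fun x => G x + G (-x + -(2 * Real.sqrt a))) = Set.univ :=
      Set.eq_univ_of_forall fun x => (hposx x).ne'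
    rw [hsupp]
    simp [Real.volume_univ]
  rw [integral_add hGint hGσint, hσeq] at hpos
  linarith


lemma abs_F_le (a : ℝ) (x : ℝ) : ‖(1 - Real.tanh (a + x * Real.sqrt a)) ^ 2‖ ≤ 4 := by
  rw [Real.norm_eq_abs, abs_of_nonneg (sq_nonneg _)]
  nlinarith [one_sub_tanh_pos (a + x * Real.sqrt a), one_sub_tanh_le_two (a + x * Real.sqrt a)]

lemma integrable_F (a : ℝ) :
    Integrable (fun x => (1 - Real.tanh (a + x * Real.sqrt a)) ^ 2) (gaussianReal 0 1) :=
  (integrable_const (4 : ℝ)).mono' (continuous_F_x a).aestronglyMeasurable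
    (Eventually.of_forall (abs_F_le a))

lemma gMSE_hasDeriv {a : ℝ} (ha : 0 < a) : ∃ d, HasDerivAt gMSE d a ∧ d < 0 := by
  have hhalf : 0 < a / 2 := half_pos ha
  have hshalf : 0 < Real.sqrt (a / 2) := Real.sqrt_pos.2 hhalf
  set K := 2 / Real.sqrt (a / 2) with hK
  have hKpos : 0 < K := by positivity
  have main := hasDerivAt_integral_of_dominated_loc_of_deriv_le
    (μ := gaussianReal 0 1)
    (F := fun b x => (1 - Real.tanh (b + x * Real.sqrt b)) ^ 2)
    (F' := fun b x => -(Pfun b x))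
    (x₀ := a) (s := Metric.ball a (a / 2)) (bound := fun x => 4 + K * |x|)
    (Metric.ball_mem_nhds a hhalf)
    (Eventually.of_forall fun b => (continuous_F_x b).aestronglyMeasurable)
    (integrable_F a)
    ((continuous_P_x a).neg.aestronglyMeasurable)
    ?_ ?_ ?_
  · obtain ⟨hint, hderiv⟩ := main
    have hP : Integrable (fun x => Pfun a x) (gaussianReal 0 1) := by
      refine hint.neg.congr (Eventually.of_forall fun x => ?_)
      simp
    refine ⟨∫ x, -(Pfun a x) ∂(gaussianReal 0 1), ?_, ?_⟩
    · exact hderiv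
    · rw [integral_neg]
      exact neg_lt_zero.2 (int_P_pos ha hP)
  · -- bound
    refine Eventually.of_forall fun x => fun b hb => ?_
    have hb1 : a / 2 < b := by
      rw [Metric.mem_ball, Real.dist_eq] at hb
      cases' abs_lt.1 hb with h1 h2
      linarith
    have hbpos : 0 < b := lt_trans hhalf hb1
    have hsb : 0 < Real.sqrt b := Real.sqrt_pos.2 hbpos
    have hsble : Real.sqrt (a / 2) ≤ Real.sqrt b := Real.sqrt_le_sqrt hb1.le
    have h1 : 0 < 1 - Real.tanh (b + x * Real.sqrt b) := one_sub_tanh_pos _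
    have h2 : 1 - Real.tanh (b + x * Real.sqrt b) ≤ 2 := one_sub_tanh_le_two _
    have h3 : 0 < 1 - Real.tanh (b + x * Real.sqrt b) ^ 2 := one_sub_tanh_sq_pos _
    have h4 : 1 - Real.tanh (b + x * Real.sqrt b) ^ 2 ≤ 1 := one_sub_tanh_sq_le_one _
    have habs : |1 + x / (2 * Real.sqrt b)| ≤ 1 + |x| / (2 * Real.sqrt b) := by
      calc |1 + x / (2 * Real.sqrt b)| ≤ |(1:ℝ)| + |x / (2 * Real.sqrt b)| := abs_add_le _ _
        _ = 1 + |x| / (2 * Real.sqrt b) := by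
            rw [abs_one, abs_div, abs_of_pos (by positivity : (0:ℝ) < 2 * Real.sqrt b)]
    have hdiv : |x| / (2 * Real.sqrt b) ≤ |x| / (2 * Real.sqrt (a / 2)) := by
      apply div_le_div_of_nonneg_left (abs_nonneg x) (by positivity)
      linarith
    rw [norm_neg, Real.norm_eq_abs]
    show |Pfun b x| ≤ 4 + K * |x|
    simp only [Pfun]
    have hA : 0 ≤ 2 * (1 - Real.tanh (b + x * Real.sqrt b)) *
        (1 - Real.tanh (b + x * Real.sqrt b) ^ 2) := by positivity
    have hA4 : 2 * (1 - Real.tanh (b + x * Real.sqrt b)) *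
        (1 - Real.tanh (b + x * Real.sqrt b) ^ 2) ≤ 4 := by nlinarith
    have hB : |1 + x / (2 * Real.sqrt b)| ≤ 1 + |x| / (2 * Real.sqrt (a / 2)) :=
      habs.trans (by linarith)
    calc |2 * (1 - Real.tanh (b + x * Real.sqrt b)) *
          (1 - Real.tanh (b + x * Real.sqrt b) ^ 2) * (1 + x / (2 * Real.sqrt b))|
        = 2 * (1 - Real.tanh (b + x * Real.sqrt b)) *
          (1 - Real.tanh (b + x * Real.sqrt b) ^ 2) * |1 + x / (2 * Real.sqrt b)| := by
          rw [abs_mul, abs_of_nonneg hA]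
      _ ≤ 4 * (1 + |x| / (2 * Real.sqrt (a / 2))) :=
          mul_le_mul hA4 hB (abs_nonneg _) (by norm_num)
      _ = 4 + K * |x| := by rw [hK]; field_simp; ring
  · exact (integrable_const (4 : ℝ)).add (integrable_abs_gauss.const_mul K)
  · refine Eventually.of_forall fun x => fun b hb => ?_
    have hb1 : a / 2 < b := by
      rw [Metric.mem_ball, Real.dist_eq] at hb
      cases' abs_lt.1 hb with h1 h2
      linarith
    exact hasDeriv_F x (lt_trans hhalf hb1)

lemma continuous_gMSE : Continuous gMSE := by
  rw [continuous_iff_continuousAt]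
  intro a
  apply continuousAt_of_dominated (bound := fun _ => (4:ℝ))
    (F := fun b x => (1 - Real.tanh (b + x * Real.sqrt b)) ^ 2)
  · exact Eventually.of_forall fun b => (continuous_F_x b).aestronglyMeasurable
  · exact Eventually.of_forall fun b => Eventually.of_forall fun x => abs_F_le b x
  · exact integrable_const _
  · refine Eventually.of_forall fun x => ?_
    have : Continuous fun b => (1 - Real.tanh (b + x * Real.sqrt b)) ^ 2 :=
      ((continuous_const.sub (continuous_tanh.comp
        (continuous_id.add (continuous_const.mul Real.continuous_sqrt)))).pow 2)
    exact this.continuousAt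

lemma tendsto_gMSE : Tendsto gMSE atTop (nhds 0) := by
  have h : Tendsto (fun a : ℝ => ∫ x, (1 - Real.tanh (a + x * Real.sqrt a)) ^ 2
      ∂(gaussianReal 0 1)) atTop (nhds (∫ (_ : ℝ), (0:ℝ) ∂(gaussianReal 0 1))) := by
    apply tendsto_integral_filter_of_dominated_convergence (bound := fun _ => (4:ℝ))
    · exact Eventually.of_forall fun b => (continuous_F_x b).aestronglyMeasurable
    · exact Eventually.of_forall fun b => Eventually.of_forall fun x => abs_F_le b x
    · exact integrable_const _
    · refine Eventually.of_forall fun x => ?_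
      have h1 : Tendsto (fun a : ℝ => a + x * Real.sqrt a) atTop atTop := by
        have hsq : Tendsto Real.sqrt atTop atTop := by
          rw [show Real.sqrt = fun x : ℝ => x ^ (1/2 : ℝ) from funext fun x => Real.sqrt_eq_rpow x]
          exact tendsto_rpow_atTop (by norm_num)
        have hmul : Tendsto (fun a : ℝ => Real.sqrt a * (Real.sqrt a + x)) atTop atTop :=
          hsq.atTop_mul_atTop₀ (tendsto_atTop_add_const_right _ x hsq)
        refine hmul.congr' ?_
        filter_upwards [eventually_ge_atTop (0:ℝ)] with a ha
        linear_combination Real.mul_self_sqrt ha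
      have h2 : Tendsto (fun y : ℝ => (1 - Real.tanh y) ^ 2) atTop (nhds 0) := by
        have := tendsto_one_sub_tanh.pow 2
        simpa using this
      exact h2.comp h1
  simp only [integral_zero] at h
  exact h


end GMSEAux

/-- `g(0) = 1`, `g` is strictly decreasing on `[0, ∞)`, and `g(a) → 0` as `a → ∞`. -/
theorem gMSE_decreasing :
    gMSE 0 = 1 ∧ StrictAntiOn gMSE (Set.Ici 0) ∧ Tendsto gMSE atTop (nhds 0) := by
  refine ⟨?_, ?_, GMSEAux.tendsto_gMSE⟩
  · have h : (fun x : ℝ => (1 - Real.tanh (0 + x * Real.sqrt 0)) ^ 2) = fun _ => (1:ℝ) := by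
      funext x
      simp [Real.sqrt_zero, Real.tanh_zero]
    rw [gMSE, h]
    simp
  · apply strictAntiOn_of_deriv_neg (convex_Ici 0) GMSEAux.continuous_gMSE.continuousOn
    intro b hb
    rw [interior_Ici] at hb
    obtain ⟨d, hd, hdneg⟩ := GMSEAux.gMSE_hasDeriv hb
    rwa [hd.deriv]
end
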